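/- arXiv:2110.10132 — 7 statements merged into one kernel-verified Lean document; each statement's English description precedes it below -/
import Mathlib

section
/- Let D = (x_1,...,x_n) be points in ℝ^d with n ≥ 2, and let j ∈ [n]. Suppose that for every i ≠ j there exists a point y_i ∈ ℝ^d with ‖x_i − y_i‖ ≤ r and ‖x_j − y_i‖ ≤ r. Then the Euclidean distance between the average of all n points and the average of the n−1 points excluding x_j is at most 2r/n. -/
open Finset

/-!
Removing `x j` moves the average by `(n (n-1))⁻¹ • ∑_{i ≠ j} (x j - x i)`. Each of these `n - 1`
differences has norm at most `2r`, by the triangle inequality through the common neighbour `y`,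
so the shift has norm at most `(n - 1) · 2r / (n (n - 1)) = 2r / n`.
-/

theorem norm_sub_le_of_norm_sub_le_of_norm_sub_le {E : Type*} [SeminormedAddCommGroup E]
    {a b y : E} {r : ℝ} (ha : ‖a - y‖ ≤ r) (hb : ‖b - y‖ ≤ r) : ‖a - b‖ ≤ 2 * r := by
  calc ‖a - b‖ ≤ ‖a - y‖ + ‖y - b‖ := norm_sub_le_norm_sub_add_norm_sub a y b
    _ ≤ 2 * r := by rw [norm_sub_rev y b]; linarith

section Average

variable {ι K E : Type*} [DecidableEq ι] {s : Finset ι} {j : ι}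

theorem inv_smul_sum_sub_inv_smul_sum_erase [Field K] [AddCommGroup E] [Module K E]
    (hj : j ∈ s) (hs : (#s : K) ≠ 0) (hs₁ : (#s : K) - 1 ≠ 0) (x : ι → E) :
    (#s : K)⁻¹ • ∑ i ∈ s, x i - ((#s : K) - 1)⁻¹ • ∑ i ∈ s.erase j, x i
      = ((#s : K) * ((#s : K) - 1))⁻¹ • ∑ i ∈ s.erase j, (x j - x i) := by
  rw [← add_sum_erase s x hj, sum_sub_distrib, sum_const, ← Nat.cast_smul_eq_nsmul K,
    cast_card_erase_of_mem hj]
  match_scalars <;> field_simp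
  ring

theorem norm_inv_smul_sum_sub_inv_smul_sum_erase_le [NormedAddCommGroup E] [NormedSpace ℝ E]
    (hj : j ∈ s) (hs : 2 ≤ #s) (x : ι → E) {δ : ℝ}
    (hδ : ∀ i ∈ s.erase j, ‖x j - x i‖ ≤ δ) :
    ‖(#s : ℝ)⁻¹ • ∑ i ∈ s, x i - ((#s : ℝ) - 1)⁻¹ • ∑ i ∈ s.erase j, x i‖ ≤ δ / #s := by
  have hs₂ : (2 : ℝ) ≤ #s := by exact_mod_cast hs
  have hs₁ : 0 < (#s : ℝ) - 1 := by linarith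
  have hpos : 0 < (#s : ℝ) * ((#s : ℝ) - 1) := by positivity
  have hsum : ‖∑ i ∈ s.erase j, (x j - x i)‖ ≤ ((#s : ℝ) - 1) * δ := by
    calc ‖∑ i ∈ s.erase j, (x j - x i)‖ ≤ ∑ i ∈ s.erase j, ‖x j - x i‖ := norm_sum_le _ _
      _ ≤ ∑ _i ∈ s.erase j, δ := sum_le_sum hδ
      _ = ((#s : ℝ) - 1) * δ := by rw [sum_const, nsmul_eq_mul, cast_card_erase_of_mem hj]
  rw [inv_smul_sum_sub_inv_smul_sum_erase hj (by positivity) hs₁.ne', norm_smul,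
    Real.norm_of_nonneg (inv_nonneg.mpr hpos.le)]
  calc ((#s : ℝ) * ((#s : ℝ) - 1))⁻¹ * ‖∑ i ∈ s.erase j, (x j - x i)‖
      ≤ ((#s : ℝ) * ((#s : ℝ) - 1))⁻¹ * (((#s : ℝ) - 1) * δ) := by gcongr
    _ = δ / #s := by field_simp

end Average

/-- Sensitivity of the average on friendly databases: if every point `x i` (for `i ≠ j`)
has a common `r`-close point with `x j`, then the average of all `n` points and the
average of the `n-1` points excluding `x j` differ by at most `2r/n` in Euclidean norm. -/
theorem avg_sensitivity_of_friendly {d n : ℕ} (hn : 2 ≤ n)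
    (x : Fin n → EuclideanSpace ℝ (Fin d)) (j : Fin n) (r : ℝ)
    (h : ∀ i : Fin n, i ≠ j → ∃ y : EuclideanSpace ℝ (Fin d),
        ‖x i - y‖ ≤ r ∧ ‖x j - y‖ ≤ r) :
    ‖(n : ℝ)⁻¹ • ∑ i, x i - ((n : ℝ) - 1)⁻¹ • ∑ i ∈ univ.erase j, x i‖ ≤ 2 * r / n := by
  have hclose : ∀ i ∈ univ.erase j, ‖x j - x i‖ ≤ 2 * r := fun i hi => by
    obtain ⟨y, hiy, hjy⟩ := h i (ne_of_mem_erase hi)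
    exact norm_sub_le_of_norm_sub_le_of_norm_sub_le hjy hiy
  simpa using norm_inv_smul_sum_sub_inv_smul_sum_erase_le (mem_univ j)
    (by simpa using hn) x hclose
end

section
/- Let X, Y, Z be k-tuples of points in ℝ^d and γ ∈ [0,1) with γ < 1/3. If match_γ^{id}(X,Z) = 1 and match_γ^{id}(Y,Z) = 1, then match_{2γ/(1−γ)}^{id}(X,Y) = 1, where id is the identity permutation. -/
/-- Pure real-arithmetic core of the match transitivity bound. -/
lemma matchPerm_arith (γ E a b c G : ℝ) (hγ0 : 0 ≤ γ) (hγ : γ < 1 / 3)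
    (hE0 : 0 ≤ E) (ha0 : 0 ≤ a)
    (kA : a < γ * (E + b)) (kB : b < γ * (E + a)) (kC : c < γ * (E + a))
    (tG : G ≤ a + c) : G < 2 * γ / (1 - γ) * E := by
  have h1γ : (0:ℝ) < 1 - γ := by linarith
  have hA' : a * (1 - γ) < γ * E := by
    nlinarith [mul_le_mul_of_nonneg_left kB.le hγ0]
  have hB' : c * (1 - γ) < γ * E := by
    nlinarith [mul_le_mul_of_nonneg_left hA'.le hγ0,
      mul_lt_mul_of_pos_right kC h1γ]
  rw [div_mul_eq_mul_div, lt_div_iff₀ h1γ]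
  nlinarith [mul_le_mul_of_nonneg_right tG h1γ.le]

/-- `matchPerm γ π X Y` holds iff for every `i`,
`‖X i - Y (π i)‖ < γ · min_{j ≠ i} min {‖X i - Y (π j)‖, ‖X j - Y (π i)‖}`. -/
def matchPerm {d k : ℕ} (γ : ℝ) (π : Equiv.Perm (Fin k))
    (X Y : Fin k → EuclideanSpace ℝ (Fin d)) : Prop :=
  ∀ i j : Fin k, j ≠ i →
    ‖X i - Y (π i)‖ < γ * ‖X i - Y (π j)‖ ∧ ‖X i - Y (π i)‖ < γ * ‖X j - Y (π i)‖

/-- Approximate triangle inequality for `match` with the identity permutation: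
if `X` and `Y` both `γ`-match `Z` (via the identity), then `X` and `Y`
`(2γ/(1-γ))`-match each other (via the identity). -/
theorem matchPerm_id_trans {d k : ℕ} (γ : ℝ) (hγ0 : 0 ≤ γ) (hγ : γ < 1 / 3)
    (X Y Z : Fin k → EuclideanSpace ℝ (Fin d))
    (hXZ : matchPerm γ (Equiv.refl (Fin k)) X Z)
    (hYZ : matchPerm γ (Equiv.refl (Fin k)) Y Z) :
    matchPerm (2 * γ / (1 - γ)) (Equiv.refl (Fin k)) X Y := by
  intro i j hji
  have hij : i ≠ j := hji.symm
  obtain ⟨hX1, hX2⟩ := hXZ i j hji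
  obtain ⟨hY1, hY2⟩ := hYZ i j hji
  obtain ⟨hX1', hX2'⟩ := hXZ j i hij
  obtain ⟨hY1', hY2'⟩ := hYZ j i hij
  simp only [Equiv.refl_apply] at hX1 hX2 hY1 hY2 hX1' hX2' hY1' hY2' ⊢
  have tG : ‖X i - Y i‖ ≤ ‖X i - Z i‖ + ‖Y i - Z i‖ := by
    calc ‖X i - Y i‖ ≤ ‖X i - Z i‖ + ‖Z i - Y i‖ := norm_sub_le_norm_sub_add_norm_sub _ _ _
    _ = _ := by rw [norm_sub_rev (Z i)]
  have tG' : ‖X i - Y i‖ ≤ ‖Y i - Z i‖ + ‖X i - Z i‖ := by linarith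
  have t1 : ‖X i - Z j‖ ≤ ‖X i - Y j‖ + ‖Y j - Z j‖ :=
    norm_sub_le_norm_sub_add_norm_sub _ _ _
  have t2 : ‖Y j - Z i‖ ≤ ‖X i - Y j‖ + ‖X i - Z i‖ := by
    calc ‖Y j - Z i‖ ≤ ‖Y j - X i‖ + ‖X i - Z i‖ := norm_sub_le_norm_sub_add_norm_sub _ _ _
    _ = _ := by rw [norm_sub_rev (Y j)]
  have t3 : ‖X j - Z i‖ ≤ ‖X j - Y i‖ + ‖Y i - Z i‖ :=
    norm_sub_le_norm_sub_add_norm_sub _ _ _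
  have t4 : ‖Y i - Z j‖ ≤ ‖X j - Y i‖ + ‖X j - Z j‖ := by
    calc ‖Y i - Z j‖ ≤ ‖Y i - X j‖ + ‖X j - Z j‖ := norm_sub_le_norm_sub_add_norm_sub _ _ _
    _ = _ := by rw [norm_sub_rev (Y i)]
  constructor
  · exact matchPerm_arith γ ‖X i - Y j‖ ‖X i - Z i‖ ‖Y j - Z j‖ ‖Y i - Z i‖ ‖X i - Y i‖
      hγ0 hγ (norm_nonneg _) (norm_nonneg _)
      (hX1.trans_le (mul_le_mul_of_nonneg_left t1 hγ0))
      (hY1'.trans_le (mul_le_mul_of_nonneg_left t2 hγ0))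
      (hY2.trans_le (mul_le_mul_of_nonneg_left t2 hγ0)) tG
  · exact matchPerm_arith γ ‖X j - Y i‖ ‖Y i - Z i‖ ‖X j - Z j‖ ‖X i - Z i‖ ‖X i - Y i‖
      hγ0 hγ (norm_nonneg _) (norm_nonneg _)
      (hY1.trans_le (mul_le_mul_of_nonneg_left t4 hγ0))
      (hX1'.trans_le (mul_le_mul_of_nonneg_left t3 hγ0))
      (hX2.trans_le (mul_le_mul_of_nonneg_left t3 hγ0)) tG'
end

section
/- If a database D of k-tuples in (ℝ^d)^k is match_γ-friendly with γ ≤ 1/7, then D is match_{2γ/(1−γ)}-complete; in particular a match_{1/7}-friendly database is match_{1/3}-complete. -/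
/-- `matchTuples γ X Y` holds iff some permutation matches `X` with `Y`. -/
def matchTuples {d k : ℕ} (γ : ℝ) (X Y : Fin k → EuclideanSpace ℝ (Fin d)) : Prop :=
  ∃ π : Equiv.Perm (Fin k), matchPerm γ π X Y

private lemma match_key {d k : ℕ} {γ : ℝ} (hγ0 : 0 ≤ γ) (hγ1 : γ < 1)
    {X Y Z : Fin k → EuclideanSpace ℝ (Fin d)} {π σ : Equiv.Perm (Fin k)}
    (hX : matchPerm γ π X Z) (hY : matchPerm γ σ Y Z) (i j : Fin k) (hij : j ≠ i) :
    ‖X i - Y (σ.symm (π i))‖ < (2 * γ / (1 - γ)) * ‖X i - Y (σ.symm (π j))‖ := by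
  set a := ‖X i - Z (π i)‖ with ha
  set b1 := ‖Y (σ.symm (π i)) - Z (π i)‖ with hb1
  set b2 := ‖Y (σ.symm (π j)) - Z (π j)‖ with hb2
  set N := ‖X i - Y (σ.symm (π j))‖ with hN
  set M := ‖X i - Z (π j)‖ with hM
  set P := ‖Y (σ.symm (π j)) - Z (π i)‖ with hP
  have hττ : σ.symm (π j) ≠ σ.symm (π i) := by
    simp only [ne_eq, EmbeddingLike.apply_eq_iff_eq]
    exact hij
  have h1 : a < γ * M := (hX i j hij).1
  have h2 : b1 < γ * P := by
    have := (hY (σ.symm (π i)) (σ.symm (π j)) hττ).2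
    simpa using this
  have h3 : b2 < γ * P := by
    have := (hY (σ.symm (π j)) (σ.symm (π i)) hττ.symm).1
    simpa using this
  have htriP : P ≤ N + a := by
    have := norm_sub_le_norm_sub_add_norm_sub (Y (σ.symm (π j))) (X i) (Z (π i))
    calc P ≤ ‖Y (σ.symm (π j)) - X i‖ + ‖X i - Z (π i)‖ := this
      _ = N + a := by rw [norm_sub_rev (Y _)]
  have htriM : M ≤ N + b2 :=
    norm_sub_le_norm_sub_add_norm_sub (X i) (Y (σ.symm (π j))) (Z (π j))
  have htri : ‖X i - Y (σ.symm (π i))‖ ≤ a + b1 := by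
    calc ‖X i - Y (σ.symm (π i))‖ ≤ ‖X i - Z (π i)‖ + ‖Z (π i) - Y (σ.symm (π i))‖ :=
          norm_sub_le_norm_sub_add_norm_sub _ _ _
      _ = a + b1 := by rw [norm_sub_rev (Z _)]
  have hNnn : 0 ≤ N := norm_nonneg _
  have hann : 0 ≤ a := norm_nonneg _
  have hb1nn : 0 ≤ b1 := norm_nonneg _
  have hb2nn : 0 ≤ b2 := norm_nonneg _
  have h1γ : 0 < 1 - γ := by linarith
  have key : (a + b1) * (1 - γ) < 2 * γ * N := by
    nlinarith [mul_le_mul_of_nonneg_left htriM hγ0, mul_le_mul_of_nonneg_left htriP hγ0,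
      mul_le_mul_of_nonneg_left h3.le hγ0, mul_le_mul_of_nonneg_left h2.le hγ0,
      mul_le_mul_of_nonneg_left h1.le hγ0]
  have : a + b1 < 2 * γ / (1 - γ) * N := by
    rw [div_mul_eq_mul_div, lt_div_iff₀ h1γ]
    exact key
  linarith [htri]

/-- A `match_γ`-friendly database of `k`-tuples (with `γ ≤ 1/7`) is
`match_{2γ/(1-γ)}`-complete. -/
theorem matchFriendly_implies_complete {d k : ℕ} (γ : ℝ) (hγ0 : 0 ≤ γ) (hγ : γ ≤ 1 / 7)
    (D : Set (Fin k → EuclideanSpace ℝ (Fin d)))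
    (hfriendly : ∀ X ∈ D, ∀ Y ∈ D, ∃ Z : Fin k → EuclideanSpace ℝ (Fin d),
        matchTuples γ X Z ∧ matchTuples γ Y Z) :
    ∀ X ∈ D, ∀ Y ∈ D, matchTuples (2 * γ / (1 - γ)) X Y := by
  intro X hXD Y hYD
  obtain ⟨Z, ⟨π, hX⟩, ⟨σ, hY⟩⟩ := hfriendly X hXD Y hYD
  have hγ1 : γ < 1 := by linarith
  refine ⟨π.trans σ.symm, ?_⟩
  intro i j hij
  constructor
  · exact match_key hγ0 hγ1 hX hY i j hij
  · have h := match_key hγ0 hγ1 hY hX (σ.symm (π i)) (σ.symm (π j))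
      (by simpa [ne_eq, EmbeddingLike.apply_eq_iff_eq] using hij)
    simp only [Equiv.apply_symm_apply, Equiv.symm_apply_apply] at h
    calc ‖X i - Y (π.trans σ.symm i)‖ = ‖Y (σ.symm (π i)) - X i‖ := by
          rw [norm_sub_rev]; rfl
      _ < 2 * γ / (1 - γ) * ‖Y (σ.symm (π i)) - X j‖ := h
      _ = 2 * γ / (1 - γ) * ‖X j - Y (π.trans σ.symm i)‖ := by rw [norm_sub_rev]; rfl
end

section
/- For a match_{1/7}-friendly set S of k-tuples in ℝ^d and any X, Y ∈ S, there exists a permutation π of [k] (depending only on X and Y) such that for every Z ∈ S, ordering Z by X and ordering Z by Y differ exactly by π: if Z̃ = ord_X(Z) and Z̃' = ord_Y(Z), then Z̃_{π(i)} = Z̃'_i for all i. -/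
/-- Values of a `matchPerm 1` matching are unique: any two matching permutations
produce the same ordered tuple of values. -/
theorem matchPerm_one_unique {d k : ℕ} {σ σ' : Equiv.Perm (Fin k)}
    {X Z : Fin k → EuclideanSpace ℝ (Fin d)}
    (h : matchPerm 1 σ X Z) (h' : matchPerm 1 σ' X Z) (i : Fin k) :
    Z (σ i) = Z (σ' i) := by
  by_contra hne
  have hm : σ.symm (σ' i) ≠ i := by
    intro he
    apply hne
    have : σ (σ.symm (σ' i)) = σ i := by rw [he]
    rw [Equiv.apply_symm_apply] at this
    rw [this]
  have hm' : σ'.symm (σ i) ≠ i := by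
    intro he
    apply hne
    have : σ' (σ'.symm (σ i)) = σ' i := by rw [he]
    rw [Equiv.apply_symm_apply] at this
    rw [this]
  have h1 := (h i (σ.symm (σ' i)) hm).1
  rw [Equiv.apply_symm_apply] at h1
  have h2 := (h' i (σ'.symm (σ i)) hm').1
  rw [Equiv.apply_symm_apply] at h2
  linarith

/-- Two-pivot composition: if `X` and `Y` are `1/7`-matched into a common `W`, and
`Y` and `Z` are `1/7`-matched into a common `U`, then the composed permutation is a
`matchPerm 1` matching between `X` and `Z`. -/
theorem two_pivot {d k : ℕ} {α β φ ψ : Equiv.Perm (Fin k)}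
    {X Y W U Z : Fin k → EuclideanSpace ℝ (Fin d)}
    (hα : matchPerm (1/7) α X W) (hβ : matchPerm (1/7) β Y W)
    (hφ : matchPerm (1/7) φ Y U) (hψ : matchPerm (1/7) ψ Z U) :
    matchPerm 1 (α.trans (β.symm.trans (φ.trans ψ.symm))) X Z := by
  intro i j hij
  simp only [Equiv.trans_apply]
  have tri : ∀ A B C : EuclideanSpace ℝ (Fin d), ‖A - C‖ ≤ ‖A - B‖ + ‖B - C‖ := by
    intro A B C
    have := dist_triangle A B C
    simpa [dist_eq_norm] using this
  -- point abbreviations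
  set x := X i with hxdef
  set x' := X j with hx'def
  set w := W (α i) with hwdef
  set w' := W (α j) with hw'def
  set y := Y (β.symm (α i)) with hydef
  set y' := Y (β.symm (α j)) with hy'def
  set u := U (φ (β.symm (α i))) with hudef
  set u' := U (φ (β.symm (α j))) with hu'def
  set z := Z (ψ.symm (φ (β.symm (α i)))) with hzdef
  set z' := Z (ψ.symm (φ (β.symm (α j)))) with hz'def
  -- index distinctness
  have hll' : β.symm (α j) ≠ β.symm (α i) := by
    intro h
    exact hij (α.injective (β.symm.injective h))
  have hl'l : β.symm (α i) ≠ β.symm (α j) := fun h => hll' h.symm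
  have hpp' : ψ.symm (φ (β.symm (α j))) ≠ ψ.symm (φ (β.symm (α i))) := by
    intro h
    exact hll' (φ.injective (ψ.symm.injective h))
  have hp'p : ψ.symm (φ (β.symm (α i))) ≠ ψ.symm (φ (β.symm (α j))) := fun h => hpp' h.symm
  -- matching inequalities
  have hai := (hα i j hij).1
  have hai2 := (hα i j hij).2
  have haj := (hα j i (Ne.symm hij)).1
  have hb1 := hβ (β.symm (α i)) (β.symm (α j)) hll'
  have hb2 := hβ (β.symm (α j)) (β.symm (α i)) hl'l
  simp only [Equiv.apply_symm_apply] at hb1 hb2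
  have hci1 := hb1.1   -- ‖y - w‖ < 1/7 ‖y - w'‖
  have hci2 := hb1.2   -- ‖y - w‖ < 1/7 ‖y' - w‖
  have hcj1 := hb2.1   -- ‖y' - w'‖ < 1/7 ‖y' - w‖
  have hcj2 := hb2.2   -- ‖y' - w'‖ < 1/7 ‖y - w'‖
  have hf1 := hφ (β.symm (α i)) (β.symm (α j)) hll'
  have hf2 := hφ (β.symm (α j)) (β.symm (α i)) hl'l
  have hei1 := hf1.1   -- ‖y - u‖ < 1/7 ‖y - u'‖
  have hei2 := hf1.2   -- ‖y - u‖ < 1/7 ‖y' - u‖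
  have hej1 := hf2.1   -- ‖y' - u'‖ < 1/7 ‖y' - u‖
  have hej2 := hf2.2   -- ‖y' - u'‖ < 1/7 ‖y - u'‖
  have hp1 := hψ (ψ.symm (φ (β.symm (α i)))) (ψ.symm (φ (β.symm (α j)))) hpp'
  have hp2 := hψ (ψ.symm (φ (β.symm (α j)))) (ψ.symm (φ (β.symm (α i)))) hp'p
  simp only [Equiv.apply_symm_apply] at hp1 hp2
  have hfi1 := hp1.1   -- ‖z - u‖ < 1/7 ‖z - u'‖
  have hfj1 := hp2.1   -- ‖z' - u'‖ < 1/7 ‖z' - u‖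
  constructor
  · -- first component : ‖x - z‖ < 1 * ‖x - z'‖
    by_contra hcon
    push_neg at hcon
    have t1 := tri x u z
    have t2 := tri x y u
    have t3 := tri x w y
    have t4 := tri x z' w'
    have t5 := tri z' u' w'
    have t6 := tri u' y' w'
    have t7 := tri y' x w
    have t8 := tri y' z' x
    have t9 := tri y' u' z'
    have t10 := tri y x u'
    have t11 := tri x z' u'
    have t12 := tri z' x u
    have t13 := tri x z u'
    have t13' := tri z x u'
    have r1 : ‖w - y‖ = ‖y - w‖ := norm_sub_rev _ _
    have r2 : ‖u - z‖ = ‖z - u‖ := norm_sub_rev _ _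
    have r3 : ‖u' - y'‖ = ‖y' - u'‖ := norm_sub_rev _ _
    have r4 : ‖u' - z'‖ = ‖z' - u'‖ := norm_sub_rev _ _
    have r5 : ‖z' - x‖ = ‖x - z'‖ := norm_sub_rev _ _
    have r6 : ‖y - x‖ = ‖x - y‖ := norm_sub_rev _ _
    have r7 : ‖z - x‖ = ‖x - z‖ := norm_sub_rev _ _
    linarith
  · -- second component : ‖x - z‖ < 1 * ‖x' - z‖
    by_contra hcon
    push_neg at hcon
    have s1 := tri x u z
    have s2 := tri x y u
    have s3 := tri x w y
    have s4 := tri z x' u'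
    have s5 := tri x' y' u'
    have s6 := tri x' w' y'
    have s7 := tri y' x' u
    have s8 := tri x' z u
    have s9 := tri y' w' x'
    have s10 := tri y x' w'
    have s11 := tri y z x'
    have s12 := tri y u z
    have s13 := tri x' z w
    have s14 := tri z y w
    have s15 := tri x x' w'
    have s16 := tri x z x'
    have q1 : ‖w - y‖ = ‖y - w‖ := norm_sub_rev _ _
    have q2 : ‖u - z‖ = ‖z - u‖ := norm_sub_rev _ _
    have q3 : ‖z - x'‖ = ‖x' - z‖ := norm_sub_rev _ _
    have q4 : ‖w' - y'‖ = ‖y' - w'‖ := norm_sub_rev _ _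
    have q5 : ‖w' - x'‖ = ‖x' - w'‖ := norm_sub_rev _ _
    have q6 : ‖z - y‖ = ‖y - z‖ := norm_sub_rev _ _
    linarith

/-- For a `match_{1/7}`-friendly set `S` of `k`-tuples and any `X, Y ∈ S`, there is a
single permutation `π` (depending only on `X, Y`) such that for every `Z ∈ S`,
ordering `Z` by `X` (via any matching permutation `σ`) and ordering `Z` by `Y`
(via any matching permutation `τ`) differ exactly by `π`:
`(Z ∘ σ) (π i) = (Z ∘ τ) i` for all `i`. -/
theorem same_ordering {d k : ℕ}
    (S : Set (Fin k → EuclideanSpace ℝ (Fin d)))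
    (hfriendly : ∀ X ∈ S, ∀ Y ∈ S, ∃ Z : Fin k → EuclideanSpace ℝ (Fin d),
        matchTuples (1 / 7) X Z ∧ matchTuples (1 / 7) Y Z)
    (X : Fin k → EuclideanSpace ℝ (Fin d)) (hX : X ∈ S)
    (Y : Fin k → EuclideanSpace ℝ (Fin d)) (hY : Y ∈ S) :
    ∃ π : Equiv.Perm (Fin k), ∀ Z ∈ S, ∀ σ τ : Equiv.Perm (Fin k),
      matchPerm 1 σ X Z → matchPerm 1 τ Y Z →
      ∀ i : Fin k, Z (σ (π i)) = Z (τ i) := by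
  obtain ⟨W, ⟨α, hα⟩, ⟨β, hβ⟩⟩ := hfriendly X hX Y hY
  refine ⟨β.trans α.symm, ?_⟩
  intro Z hZ σ τ hσ hτ i
  obtain ⟨U, ⟨φ, hφ⟩, ⟨ψ, hψ⟩⟩ := hfriendly Y hY Z hZ
  have hω : matchPerm 1 (α.trans (β.symm.trans (φ.trans ψ.symm))) X Z :=
    two_pivot hα hβ hφ hψ
  have hν : matchPerm 1 (φ.trans (φ.symm.trans (φ.trans ψ.symm))) Y Z :=
    two_pivot hφ hφ hφ hψ
  have e1 := matchPerm_one_unique hσ hω ((β.trans α.symm) i)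
  have e2 := matchPerm_one_unique hτ hν i
  rw [e1, e2]
  simp [Equiv.trans_apply, Equiv.apply_symm_apply, Equiv.symm_apply_apply]
end

section
/- Let P and Q be probability measures on a space X with finite Rényi divergence D_α(P‖Q) for some α > 1, and let E be an event with P(E) > 0 and Q(E) > 0. Then D_α(P|_E ‖ Q|_E) ≤ (1/P(E)) · D_α(P‖Q), where P|_E denotes conditioning on E. -/
open Finset

/-- Rényi divergence of order `α` between two discrete distributions on a finite type. -/
noncomputable def renyiDiv {X : Type*} [Fintype X] (α : ℝ) (P Q : X → ℝ) : ℝ :=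
  (α - 1)⁻¹ * Real.log (∑ x, (P x) ^ α / (Q x) ^ (α - 1))

/-- Conditioning a discrete distribution on an event `E`. -/
noncomputable def condOn {X : Type*} [Fintype X] [DecidableEq X]
    (P : X → ℝ) (E : Finset X) : X → ℝ :=
  fun x => if x ∈ E then P x / ∑ y ∈ E, P y else 0

/-!
Write `p = P(E)`, `q = Q(E)` and `S_A = ∑_{x ∈ A} P(x)^α / Q(x)^(α-1)`, so that the claim is
`T ^ p ≤ S_univ` for `T = q^(α-1) / p^α · S_E`, the Rényi sum of the conditioned pair.
Everything follows from Radon's inequality `(∑ a)^α / (∑ b)^(α-1) ≤ ∑ a^α / b^(α-1)`: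
applied on `Eᶜ` it gives `S_Eᶜ ≥ (1-p)^α / (1-q)^(α-1)`, and applied to the two points
`(p T^(1/α), q)` and `(1-p, 1-q)` it gives
`S_E + (1-p)^α / (1-q)^(α-1) ≥ (p T^(1/α) + 1 - p)^α ≥ T^p`, the last step by Bernoulli.
-/

namespace Real

variable {α : ℝ}

theorem rpow_sum_div_rpow_sum_le {ι : Type*} (s : Finset ι) (hα : 1 ≤ α) {f g : ι → ℝ}
    (hf : ∀ i ∈ s, 0 ≤ f i) (hg : ∀ i ∈ s, 0 ≤ g i) (hfg : ∀ i ∈ s, g i = 0 → f i = 0) :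
    (∑ i ∈ s, f i) ^ α / (∑ i ∈ s, g i) ^ (α - 1) ≤ ∑ i ∈ s, f i ^ α / g i ^ (α - 1) := by
  have hα₀ : α ≠ 0 := by positivity
  rcases (sum_nonneg hg).eq_or_lt with hb | hb
  · have hf₀ : ∑ i ∈ s, f i = 0 :=
      sum_eq_zero fun i hi ↦ hfg i hi ((sum_eq_zero_iff_of_nonneg hg).1 hb.symm i hi)
    rw [hf₀, zero_rpow hα₀, zero_div]
    exact sum_nonneg fun i hi ↦ div_nonneg (rpow_nonneg (hf i hi) _) (rpow_nonneg (hg i hi) _)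
  -- Jensen for `x ↦ x^α` with weights `g i / ∑ g` at the points `f i / g i`.
  set b := ∑ i ∈ s, g i
  have hmean : ∀ i ∈ s, g i / b * (f i / g i) = f i / b := fun i hi ↦ by
    rcases (hg i hi).eq_or_lt with h | h
    · simp [← h, hfg i hi h.symm]
    · field_simp
  have hpow : ∀ i ∈ s, g i / b * (f i / g i) ^ α = f i ^ α / g i ^ (α - 1) / b := fun i hi ↦ by
    rcases (hg i hi).eq_or_lt with h | h
    · simp [← h, hfg i hi h.symm, zero_rpow hα₀]
    · rw [div_rpow (hf i hi) h.le, rpow_sub h, rpow_one]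
      field_simp
  have hJ := rpow_arith_mean_le_arith_mean_rpow s (fun i ↦ g i / b) (fun i ↦ f i / g i)
    (fun i hi ↦ div_nonneg (hg i hi) hb.le) (by rw [← sum_div, div_self hb.ne'])
    (fun i hi ↦ div_nonneg (hf i hi) (hg i hi)) hα
  rw [sum_congr rfl hmean, sum_congr rfl hpow, ← sum_div, ← sum_div,
    div_rpow (sum_nonneg hf) hb.le, div_le_div_iff₀ (rpow_pos_of_pos hb _) hb] at hJ
  rwa [rpow_sub hb, rpow_one, div_div_eq_mul_div, div_le_iff₀ (rpow_pos_of_pos hb _)]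

theorem add_rpow_div_le (hα : 1 ≤ α) {a₁ a₂ b₁ b₂ : ℝ} (ha₁ : 0 ≤ a₁) (ha₂ : 0 ≤ a₂)
    (hb₁ : 0 ≤ b₁) (hb₂ : 0 ≤ b₂) (hab₁ : b₁ = 0 → a₁ = 0) (hab₂ : b₂ = 0 → a₂ = 0) :
    (a₁ + a₂) ^ α / (b₁ + b₂) ^ (α - 1) ≤ a₁ ^ α / b₁ ^ (α - 1) + a₂ ^ α / b₂ ^ (α - 1) := by
  simpa [Fin.sum_univ_two] using rpow_sum_div_rpow_sum_le univ hα (f := ![a₁, a₂])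
    (g := ![b₁, b₂]) (by simp [Fin.forall_fin_two, ha₁, ha₂])
    (by simp [Fin.forall_fin_two, hb₁, hb₂]) (by simpa [Fin.forall_fin_two] using ⟨hab₁, hab₂⟩)

theorem rpow_le_mul_div_add_one_sub_div (hα : 1 ≤ α) {p q T : ℝ} (hp₀ : 0 ≤ p) (hp₁ : p ≤ 1)
    (hq₀ : 0 ≤ q) (hq₁ : q ≤ 1) (hpq₀ : q = 0 → p = 0) (hpq₁ : q = 1 → p = 1) (hT : 0 ≤ T) :
    T ^ p ≤ p ^ α * T / q ^ (α - 1) + (1 - p) ^ α / (1 - q) ^ (α - 1) := by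
  have hα₀ : α ≠ 0 := by positivity
  set u := T ^ α⁻¹
  have hu : 0 ≤ u := rpow_nonneg hT _
  have huT : u ^ α = T := rpow_inv_rpow hT hα₀
  have hbernoulli : u ^ p ≤ p * u + (1 - p) := by
    have := rpow_one_add_le_one_add_mul_self (s := u - 1) (by linarith) hp₀ hp₁
    rw [add_sub_cancel] at this
    linarith
  calc T ^ p = (u ^ p) ^ α := by rw [← huT, ← rpow_mul hu, ← rpow_mul hu, mul_comm]
    _ ≤ (p * u + (1 - p)) ^ α / (q + (1 - q)) ^ (α - 1) := by
      rw [add_sub_cancel, one_rpow, div_one]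
      gcongr
    _ ≤ (p * u) ^ α / q ^ (α - 1) + (1 - p) ^ α / (1 - q) ^ (α - 1) :=
      add_rpow_div_le hα (by positivity) (by linarith) hq₀ (by linarith)
        (fun h ↦ by simp [hpq₀ h]) (fun h ↦ by linarith [hpq₁ (by linarith)])
    _ = p ^ α * T / q ^ (α - 1) + (1 - p) ^ α / (1 - q) ^ (α - 1) := by
      rw [mul_rpow hp₀ hu, huT]

end Real

theorem sum_condOn_rpow_div {X : Type*} [Fintype X] [DecidableEq X] {α : ℝ} (hα : α ≠ 0)
    {P Q : X → ℝ} {E : Finset X} (hP : ∀ x ∈ E, 0 ≤ P x) (hQ : ∀ x ∈ E, 0 ≤ Q x) :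
    ∑ x, condOn P E x ^ α / condOn Q E x ^ (α - 1) =
      (∑ x ∈ E, Q x) ^ (α - 1) / (∑ x ∈ E, P x) ^ α * ∑ x ∈ E, P x ^ α / Q x ^ (α - 1) := by
  rw [mul_sum, ← sum_subset (subset_univ E) fun x _ hx ↦ by simp [condOn, hx, Real.zero_rpow hα]]
  refine sum_congr rfl fun x hx ↦ ?_
  simp only [condOn, if_pos hx]
  rw [Real.div_rpow (hP x hx) (sum_nonneg hP), Real.div_rpow (hQ x hx) (sum_nonneg hQ)]
  simp only [div_eq_mul_inv, mul_inv, inv_inv]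
  ring

theorem rpow_le_sum_rpow_div_rpow_of_cond {X : Type*} [Fintype X] {α : ℝ} (hα : 1 ≤ α)
    {P Q : X → ℝ} (hP : ∀ x, 0 ≤ P x) (hQ : ∀ x, 0 ≤ Q x) (hP1 : ∑ x, P x = 1)
    (hQ1 : ∑ x, Q x = 1) (hac : ∀ x, Q x = 0 → P x = 0) {E : Finset X}
    (hPE : 0 < ∑ x ∈ E, P x) (hQE : 0 < ∑ x ∈ E, Q x) :
    ((∑ x ∈ E, Q x) ^ (α - 1) / (∑ x ∈ E, P x) ^ α * ∑ x ∈ E, P x ^ α / Q x ^ (α - 1)) ^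
      (∑ x ∈ E, P x) ≤ ∑ x, P x ^ α / Q x ^ (α - 1) := by
  classical
  set p := ∑ x ∈ E, P x
  set q := ∑ x ∈ E, Q x
  set S_E := ∑ x ∈ E, P x ^ α / Q x ^ (α - 1)
  set T := q ^ (α - 1) / p ^ α * S_E
  have hPc : ∑ x ∈ Eᶜ, P x = 1 - p := by rw [← hP1, ← sum_compl_add_sum E]; ring
  have hQc : ∑ x ∈ Eᶜ, Q x = 1 - q := by rw [← hQ1, ← sum_compl_add_sum E]; ring
  have hq_eq_one : q = 1 → p = 1 := fun hq ↦ by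
    have hQc₀ := (sum_eq_zero_iff_of_nonneg fun x _ ↦ hQ x).1 (hQc.trans (sub_eq_zero.2 hq.symm))
    linarith [sum_eq_zero fun x hx ↦ hac x (hQc₀ x hx)]
  have hS_Ec : (1 - p) ^ α / (1 - q) ^ (α - 1) ≤ ∑ x ∈ Eᶜ, P x ^ α / Q x ^ (α - 1) := by
    rw [← hPc, ← hQc]
    exact Real.rpow_sum_div_rpow_sum_le Eᶜ hα (fun x _ ↦ hP x) (fun x _ ↦ hQ x) fun x _ ↦ hac x
  have hT : 0 ≤ T := by
    have : 0 ≤ S_E := sum_nonneg fun x _ ↦ by have := hP x; have := hQ x; positivity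
    positivity
  have hS_E : p ^ α * T / q ^ (α - 1) = S_E := by
    have : p ^ α ≠ 0 := by positivity
    have : q ^ (α - 1) ≠ 0 := by positivity
    simp only [T]
    field_simp
  calc T ^ p ≤ p ^ α * T / q ^ (α - 1) + (1 - p) ^ α / (1 - q) ^ (α - 1) :=
        Real.rpow_le_mul_div_add_one_sub_div hα hPE.le
          (by linarith [sum_nonneg fun x (_ : x ∈ Eᶜ) ↦ hP x]) hQE.le
          (by linarith [sum_nonneg fun x (_ : x ∈ Eᶜ) ↦ hQ x]) (fun h ↦ absurd h hQE.ne')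
          hq_eq_one hT
    _ ≤ S_E + ∑ x ∈ Eᶜ, P x ^ α / Q x ^ (α - 1) := by rw [hS_E]; gcongr
    _ = ∑ x, P x ^ α / Q x ^ (α - 1) := sum_add_sum_compl E _

/-- Rényi divergence under conditioning:
`D_α(P|_E ‖ Q|_E) ≤ (1 / P(E)) · D_α(P ‖ Q)`. -/
theorem renyiDiv_cond_le {X : Type*} [Fintype X] [DecidableEq X]
    (α : ℝ) (hα : 1 < α) (P Q : X → ℝ)
    (hP : ∀ x, 0 ≤ P x) (hQ : ∀ x, 0 ≤ Q x)
    (hP1 : ∑ x, P x = 1) (hQ1 : ∑ x, Q x = 1)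
    (hac : ∀ x, Q x = 0 → P x = 0)
    (E : Finset X) (hPE : 0 < ∑ x ∈ E, P x) (hQE : 0 < ∑ x ∈ E, Q x) :
    renyiDiv α (condOn P E) (condOn Q E) ≤ (∑ x ∈ E, P x)⁻¹ * renyiDiv α P Q := by
  rw [renyiDiv, renyiDiv, sum_condOn_rpow_div (by positivity) (fun x _ ↦ hP x) (fun x _ ↦ hQ x),
    mul_left_comm]
  have hradon := Real.rpow_sum_div_rpow_sum_le E hα.le (fun x _ ↦ hP x) (fun x _ ↦ hQ x)
    fun x _ ↦ hac x
  have hT : 0 < (∑ x ∈ E, Q x) ^ (α - 1) / (∑ x ∈ E, P x) ^ α *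
      ∑ x ∈ E, P x ^ α / Q x ^ (α - 1) := by
    have := (by positivity : 0 < (∑ x ∈ E, P x) ^ α / (∑ x ∈ E, Q x) ^ (α - 1)).trans_le hradon
    positivity
  gcongr
  rw [le_inv_mul_iff₀ hPE, ← Real.log_rpow hT]
  exact Real.log_le_log (by positivity)
    (rpow_le_sum_rpow_div_rpow_of_cond hα.le hP hQ hP1 hQ1 hac hPE hQE)
end

section
/- Let X and X' be random variables on a space X, and suppose there exist events E, E' with P(X ∈ E) = e^{±ε₁}·P(X' ∈ E') (i.e., the ratio of the two probabilities lies in [e^{−ε₁}, e^{ε₁}]), and similarly for their complements, and such that X conditioned on E is (ε₂, δ)-DP-indistinguishable from X' conditioned on E', and X conditioned on ¬E is (ε₂, δ)-DP-indistinguishable from X' conditioned on ¬E'. Then X and X' are (ε₁+ε₂, δe^{ε₁})-DP-indistinguishable. -/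
/-! Split `μ T` and `ν T` by the law of total probability over `E, Eᶜ` and `E', E'ᶜ`, and
compare term by term: the conditional bounds contribute the factor `e^{ε₂}` and the
additive `δ`, the ratio bounds on the weights contribute the factor `e^{ε₁}`. Since the
weights `μ E, μ Eᶜ` sum to one, the additive error is only `δ ≤ δ e^{ε₁}`. -/

open MeasureTheory ProbabilityTheory

/-- `(ε,δ)`-DP-indistinguishability of two distributions: for every measurable event `T`,
`μ T ≤ e^ε ν T + δ` and symmetrically. -/
def DPIndist {X : Type*} [MeasurableSpace X] (ε δ : ℝ) (μ ν : Measure X) : Prop :=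
  ∀ T : Set X, MeasurableSet T →
    μ T ≤ ENNReal.ofReal (Real.exp ε) * ν T + ENNReal.ofReal δ ∧
    ν T ≤ ENNReal.ofReal (Real.exp ε) * μ T + ENNReal.ofReal δ

section

variable {X : Type*} [MeasurableSpace X] {μ ν : Measure X}

theorem apply_le_of_cond_le [IsProbabilityMeasure μ] [IsFiniteMeasure ν]
    {a b d : ENNReal} {E E' T : Set X} (hE : MeasurableSet E) (hE' : MeasurableSet E')
    (hw : μ E ≤ a * ν E') (hwc : μ Eᶜ ≤ a * ν E'ᶜ)
    (hc : μ[T|E] ≤ b * ν[T|E'] + d) (hcc : μ[T|Eᶜ] ≤ b * ν[T|E'ᶜ] + d) :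
    μ T ≤ a * b * ν T + d :=
  calc μ T = μ[T|E] * μ E + μ[T|Eᶜ] * μ Eᶜ := (cond_add_cond_compl_eq hE μ).symm
    _ ≤ (b * ν[T|E'] + d) * μ E + (b * ν[T|E'ᶜ] + d) * μ Eᶜ := by gcongr
    _ = b * (ν[T|E'] * μ E) + b * (ν[T|E'ᶜ] * μ Eᶜ) + d * (μ E + μ Eᶜ) := by ring
    _ ≤ b * (ν[T|E'] * (a * ν E')) + b * (ν[T|E'ᶜ] * (a * ν E'ᶜ)) + d * (μ E + μ Eᶜ) := by
        gcongr
    _ = a * b * ν T + d := by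
        rw [measure_add_measure_compl hE, measure_univ, mul_one,
          ← cond_add_cond_compl_eq (t := T) hE' ν]
        ring

theorem DPIndist.of_cond [IsProbabilityMeasure μ] [IsProbabilityMeasure ν] {ε₁ ε₂ δ : ℝ}
    {E E' : Set X} (hE : MeasurableSet E) (hE' : MeasurableSet E')
    (hratio : μ E ≤ ENNReal.ofReal (Real.exp ε₁) * ν E' ∧
      ν E' ≤ ENNReal.ofReal (Real.exp ε₁) * μ E)
    (hratioc : μ Eᶜ ≤ ENNReal.ofReal (Real.exp ε₁) * ν E'ᶜ ∧
      ν E'ᶜ ≤ ENNReal.ofReal (Real.exp ε₁) * μ Eᶜ)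
    (hcond : DPIndist ε₂ δ (μ[|E]) (ν[|E'])) (hcondc : DPIndist ε₂ δ (μ[|Eᶜ]) (ν[|E'ᶜ])) :
    DPIndist (ε₁ + ε₂) δ μ ν := by
  intro T hT
  rw [Real.exp_add, ENNReal.ofReal_mul (Real.exp_nonneg ε₁)]
  exact ⟨apply_le_of_cond_le hE hE' hratio.1 hratioc.1 (hcond T hT).1 (hcondc T hT).1,
    apply_le_of_cond_le hE' hE hratio.2 hratioc.2 (hcond T hT).2 (hcondc T hT).2⟩

theorem DPIndist.mono_delta {ε δ δ' : ℝ} (h : DPIndist ε δ μ ν)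
    (hδ : ENNReal.ofReal δ ≤ ENNReal.ofReal δ') : DPIndist ε δ' μ ν := fun T hT =>
  ⟨(h T hT).1.trans (add_le_add_right hδ _), (h T hT).2.trans (add_le_add_right hδ _)⟩

end

theorem dpIndist_of_cond_general {X : Type*} [MeasurableSpace X]
    (μ ν : Measure X) [IsProbabilityMeasure μ] [IsProbabilityMeasure ν]
    (ε₁ ε₂ δ : ℝ) (hε₁ : 0 ≤ ε₁)
    (E E' : Set X) (hE : MeasurableSet E) (hE' : MeasurableSet E')
    (hratio : μ E ≤ ENNReal.ofReal (Real.exp ε₁) * ν E' ∧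
              ν E' ≤ ENNReal.ofReal (Real.exp ε₁) * μ E)
    (hratioc : μ Eᶜ ≤ ENNReal.ofReal (Real.exp ε₁) * ν E'ᶜ ∧
               ν E'ᶜ ≤ ENNReal.ofReal (Real.exp ε₁) * μ Eᶜ)
    (hcond : DPIndist ε₂ δ (μ[|E]) (ν[|E']))
    (hcondc : DPIndist ε₂ δ (μ[|Eᶜ]) (ν[|E'ᶜ])) :
    DPIndist (ε₁ + ε₂) (δ * Real.exp ε₁) μ ν := by
  refine (DPIndist.of_cond hE hE' hratio hratioc hcond hcondc).mono_delta ?_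
  rw [ENNReal.ofReal_mul' (Real.exp_nonneg ε₁)]
  exact le_mul_of_one_le_right' (by simpa using Real.one_le_exp hε₁)

/-- If the event probabilities `μ E` and `ν E'` (and those of the complements) agree up
to a factor `e^{ε₁}`, and the conditional distributions on `E`/`E'` and on `¬E`/`¬E'`
are `(ε₂,δ)`-DP-indistinguishable, then `μ` and `ν` are
`(ε₁+ε₂, δ e^{ε₁})`-DP-indistinguishable. -/
theorem dpIndist_of_cond {X : Type*} [MeasurableSpace X]
    (μ ν : Measure X) [IsProbabilityMeasure μ] [IsProbabilityMeasure ν]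
    (ε₁ ε₂ δ : ℝ) (hε₁ : 0 ≤ ε₁) (hε₂ : 0 ≤ ε₂) (hδ : 0 ≤ δ)
    (E E' : Set X) (hE : MeasurableSet E) (hE' : MeasurableSet E')
    (hratio : μ E ≤ ENNReal.ofReal (Real.exp ε₁) * ν E' ∧
              ν E' ≤ ENNReal.ofReal (Real.exp ε₁) * μ E)
    (hratioc : μ Eᶜ ≤ ENNReal.ofReal (Real.exp ε₁) * ν E'ᶜ ∧
               ν E'ᶜ ≤ ENNReal.ofReal (Real.exp ε₁) * μ Eᶜ)
    (hcond : DPIndist ε₂ δ (μ[|E]) (ν[|E']))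
    (hcondc : DPIndist ε₂ δ (μ[|Eᶜ]) (ν[|E'ᶜ])) :
    DPIndist (ε₁ + ε₂) (δ * Real.exp ε₁) μ ν :=
  dpIndist_of_cond_general μ ν ε₁ ε₂ δ hε₁ E E' hE hE' hratio hratioc hcond hcondc
end

section
/- Let X, X' be random variables over X and E, E' events with X|_E ≈_{ρ,δ} X'|_{E'} ((ρ,δ)-zCDP-indistinguishable) and P(X ∈ E) ≥ 1−δ', P(X' ∈ E') ≥ 1−δ'. Then X ≈_{ρ, δ+δ'} X'. -/
open Finset

/-- `ρ`-indistinguishability: all Rényi divergences of order `α` (both directions)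
are at most `ρα`. -/
def Indist {X : Type*} [Fintype X] (ρ : ℝ) (P Q : X → ℝ) : Prop :=
  ∀ α : ℝ, 1 < α → renyiDiv α P Q ≤ ρ * α ∧ renyiDiv α Q P ≤ ρ * α

/-- `(ρ,δ)`-indistinguishability: there exist events of probability at least `1-δ`,
conditioned on which the distributions are `ρ`-indistinguishable. -/
def IndistApprox {X : Type*} [Fintype X] [DecidableEq X]
    (ρ δ : ℝ) (P Q : X → ℝ) : Prop :=
  ∃ F F' : Finset X, 1 - δ ≤ ∑ x ∈ F, P x ∧ 1 - δ ≤ ∑ x ∈ F', Q x ∧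
    Indist ρ (condOn P F) (condOn Q F')


lemma condOn_condOn {X : Type*} [Fintype X] [DecidableEq X]
    (P : X → ℝ) (hP : ∀ x, 0 ≤ P x) (E F : Finset X) :
    condOn (condOn P E) F = condOn P (F ∩ E) := by
  funext x
  simp only [condOn]
  have hsum : (∑ y ∈ F, if y ∈ E then P y / ∑ z ∈ E, P z else 0)
      = (∑ y ∈ F ∩ E, P y) / ∑ z ∈ E, P z := by
    rw [Finset.sum_ite_mem, Finset.sum_div]
  rw [hsum]
  by_cases hxF : x ∈ F
  · by_cases hxE : x ∈ E
    · simp only [hxF, hxE, Finset.mem_inter, and_self, if_true]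
      set S := ∑ z ∈ E, P z with hS
      set T := ∑ y ∈ F ∩ E, P y with hT
      by_cases hS0 : S = 0
      · have hPx : P x = 0 :=
          (Finset.sum_eq_zero_iff_of_nonneg (fun y _ => hP y)).mp hS0 x hxE
        simp [hPx]
      · by_cases hT0 : T = 0
        · simp [hT0, hS0]
        · field_simp
    · simp [hxF, hxE, Finset.mem_inter]
  · simp [hxF, Finset.mem_inter]

lemma sum_inter_ge {X : Type*} [Fintype X] [DecidableEq X]
    (P : X → ℝ) (hP : ∀ x, 0 ≤ P x) (hP1 : ∑ x, P x = 1)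
    (E F : Finset X) (δ δ' : ℝ)
    (hF : 1 - δ ≤ ∑ x ∈ F, condOn P E x)
    (hE : 1 - δ' ≤ ∑ x ∈ E, P x) :
    1 - (δ + δ') ≤ ∑ x ∈ F ∩ E, P x := by
  have hsum : (∑ x ∈ F, condOn P E x)
      = (∑ y ∈ F ∩ E, P y) / ∑ z ∈ E, P z := by
    simp only [condOn]
    rw [Finset.sum_ite_mem, Finset.sum_div]
  set S := ∑ z ∈ E, P z with hSdef
  set T := ∑ y ∈ F ∩ E, P y with hTdef
  have hT0 : 0 ≤ T := Finset.sum_nonneg fun y _ => hP y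
  have hTS : T ≤ S :=
    Finset.sum_le_sum_of_subset_of_nonneg (Finset.inter_subset_right)
      (fun y _ _ => hP y)
  have hS1 : S ≤ 1 := by
    rw [← hP1]
    exact Finset.sum_le_sum_of_subset_of_nonneg (Finset.subset_univ E)
      (fun y _ _ => hP y)
  rw [hsum] at hF
  by_cases hS0 : S = 0
  · have : T = 0 := le_antisymm (hS0 ▸ hTS) hT0
    rw [this] at hF ⊢
    rw [hS0] at hF hE
    simp at hF
    linarith
  · have hSpos : 0 < S := lt_of_le_of_ne (Finset.sum_nonneg fun y _ => hP y) (Ne.symm hS0)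
    have h1 : (1 - δ) * S ≤ T := by
      rw [div_eq_mul_inv] at hF
      calc (1 - δ) * S ≤ T * S⁻¹ * S := by
            exact mul_le_mul_of_nonneg_right hF hSpos.le
        _ = T := by field_simp
    have hδ : 0 ≤ δ := by
      nlinarith
    nlinarith [mul_nonneg hδ (sub_nonneg.mpr hS1)]

/-- If `X|_E ≈_{ρ,δ} X'|_{E'}` and both events have probability at least `1-δ'`,
then `X ≈_{ρ, δ+δ'} X'`. -/
theorem indist_of_cond_indist {X : Type*} [Fintype X] [DecidableEq X]
    (ρ δ δ' : ℝ) (P P' : X → ℝ)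
    (hP : ∀ x, 0 ≤ P x) (hP' : ∀ x, 0 ≤ P' x)
    (hP1 : ∑ x, P x = 1) (hP'1 : ∑ x, P' x = 1)
    (E E' : Finset X)
    (hcond : IndistApprox ρ δ (condOn P E) (condOn P' E'))
    (hE : 1 - δ' ≤ ∑ x ∈ E, P x) (hE' : 1 - δ' ≤ ∑ x ∈ E', P' x) :
    IndistApprox ρ (δ + δ') P P' := by
  obtain ⟨F, F', hF, hF', hind⟩ := hcond
  refine ⟨F ∩ E, F' ∩ E', ?_, ?_, ?_⟩
  · exact sum_inter_ge P hP hP1 E F δ δ' hF hE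
  · exact sum_inter_ge P' hP' hP'1 E' F' δ δ' hF' hE'
  · rw [condOn_condOn P hP E F, condOn_condOn P' hP' E' F'] at hind
    exact hind
end
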